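/- Let ψ_β(γ) = Σ_{k=1}^{|γ|} (−1)^{k−1}(k−1)! Σ_{π partition of γ into k blocks} exp(−β Σ_{A∈π} Û(A)), where Û(A) = Σ_{σ∈q(A)} W_σ. Then for any partition γ of [n] with |γ| ≥ 2: ψ_β(γ) = −∫_0^β Σ_{σ∈q(γ)} W_σ e^{−β' W_σ} ψ_{β'}(P_σ γ) dβ'. -/

import Mathlib

open scoped Classical

/-- `W_{{α,α'}} = ∑_{i∈α, j∈α'} V_{ij}`, the interaction between two (disjoint) blocks. -/
noncomputable def blockW (n : ℕ) (V : Sym2 (Fin n) → ℝ) (α α' : Finset (Fin n)) : ℝ :=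
  ∑ i ∈ α, ∑ j ∈ α', V s(i, j)

/-- `Û(A) = ∑_{σ ∈ q(A)} W_σ`: the total interaction between distinct blocks of the
family `A`, written as half of the ordered double sum. -/
noncomputable def Uhat (n : ℕ) (V : Sym2 (Fin n) → ℝ) (A : Finset (Finset (Fin n))) : ℝ :=
  (∑ α ∈ A, ∑ α' ∈ A.erase α, blockW n V α α') / 2

/-- `π` is a partition of the family `γ` (a "partition of a partition"). -/
def isPartitionOfFam (n : ℕ) (γ : Finset (Finset (Fin n)))
    (π : Finset (Finset (Finset (Fin n)))) : Prop :=
  (∀ A ∈ π, A.Nonempty) ∧ (∀ A ∈ π, ∀ A' ∈ π, A ≠ A' → Disjoint A A') ∧ π.sup id = γ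

/-- `ψ_β(γ) = ∑_{k=1}^{|γ|} (−1)^{k−1}(k−1)! ∑_{π ∈ Π_k(γ)} e^{−β ∑_{A∈π} Û(A)}`. -/
noncomputable def psi (n : ℕ) (V : Sym2 (Fin n) → ℝ) (β : ℝ)
    (γ : Finset (Finset (Fin n))) : ℝ :=
  ∑ k ∈ Finset.Icc 1 γ.card, (-1 : ℝ) ^ (k - 1) * (Nat.factorial (k - 1) : ℝ) *
    ∑ π ∈ Finset.univ.filter
        (fun π : Finset (Finset (Finset (Fin n))) => isPartitionOfFam n γ π ∧ π.card = k),
      Real.exp (-β * ∑ A ∈ π, Uhat n V A)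

/-- `P_σ γ`: the partition obtained from `γ` by merging the two blocks `α, α'`. -/
def mergeP (n : ℕ) (γ : Finset (Finset (Fin n))) (α α' : Finset (Fin n)) :
    Finset (Finset (Fin n)) :=
  insert (α ∪ α') ((γ.erase α).erase α')

/-- `γ` is a set partition of `[n]`. -/
def isSetPartition (n : ℕ) (γ : Finset (Finset (Fin n))) : Prop :=
  (∀ B ∈ γ, B.Nonempty) ∧ (∀ B ∈ γ, ∀ C ∈ γ, B ≠ C → Disjoint B C) ∧
    γ.sup id = (Finset.univ : Finset (Fin n))

/-!
Writing `E(π) = ∑_{A ∈ π} Û(A)`, the function `ψ_β(γ)` is the finite exponential sum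
`∑_π μ(π) e^{-β E(π)}` over the partitions `π` of the blocks of `γ`, where
`μ(π) = (-1)^{|π|-1} (|π|-1)!`. Its `β`-derivative brings down `E(π)`, which is half the sum of
`W_{αα'}` over the ordered pairs of distinct blocks `α, α'` lying in a common part of `π`.
Exchanging the sums, the partitions in which `α` and `α'` share a part correspond bijectively to
the partitions of `P_{αα'}γ`, with the same number of parts and with energy lower by exactly
`W_{αα'}`; hence `∂_β ψ_β(γ) = -½ ∑ W_σ e^{-β W_σ} ψ_β(P_σ γ)`. The fundamental theorem of
calculus then gives the claim, because `ψ_0(γ) = ∑_k μ_k S(|γ|, k)` (with `S` the Stirling numbers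
of the second kind) telescopes to `0` once `|γ| ≥ 2`.
-/

open Finset

namespace Finpartition

variable {ι : Type*} [DecidableEq ι] {s t : Finset ι}

lemma sup_parts_erase (P : Finpartition s) {B : Finset ι} (hB : B ∈ P.parts) :
    (P.parts.erase B).sup id = s \ B := by
  ext x
  simp only [mem_sup, mem_erase, id, mem_sdiff]
  constructor
  · rintro ⟨C, ⟨hCB, hC⟩, hxC⟩
    exact ⟨P.subset hC hxC, fun hxB => hCB (P.eq_of_mem_parts hC hB hxC hxB)⟩
  · rintro ⟨hxs, hxB⟩
    obtain ⟨C, hC, hxC⟩ := P.exists_mem hxs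
    exact ⟨C, ⟨fun h => hxB (h ▸ hxC), hC⟩, hxC⟩

@[simps]
def replacePart (P : Finpartition s) {B B' : Finset ι} (hB : B ∈ P.parts) (hB' : B'.Nonempty)
    (hdisj : Disjoint B' (s \ B)) (ht : s \ B ∪ B' = t) : Finpartition t where
  parts := insert B' (P.parts.erase B)
  supIndep := (P.supIndep.subset (erase_subset B _)).insert (by rwa [P.sup_parts_erase hB])
  sup_parts := by rw [sup_insert, P.sup_parts_erase hB, ← ht, sup_comm]; rfl
  bot_notMem := by
    rw [mem_insert, not_or]
    exact ⟨hB'.ne_empty.symm, fun h => P.bot_notMem (mem_of_mem_erase h)⟩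

section ReplacePart

variable (P : Finpartition s) {B B' : Finset ι}

lemma notMem_parts_erase_of_disjoint (hB : B ∈ P.parts) (hB' : B'.Nonempty)
    (hdisj : Disjoint B' (s \ B)) : B' ∉ P.parts.erase B := by
  intro h
  have hsub : B' ⊆ s \ B := P.sup_parts_erase hB ▸ le_sup (f := id) h
  obtain ⟨x, hx⟩ := hB'
  exact disjoint_left.mp hdisj hx (hsub hx)

variable (hB : B ∈ P.parts) (hB' : B'.Nonempty) (hdisj : Disjoint B' (s \ B))
  (ht : s \ B ∪ B' = t)

lemma replacePart_parts_erase :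
    (P.replacePart hB hB' hdisj ht).parts.erase B' = P.parts.erase B := by
  rw [replacePart_parts, erase_insert (P.notMem_parts_erase_of_disjoint hB hB' hdisj)]

lemma card_parts_replacePart : #(P.replacePart hB hB' hdisj ht).parts = #P.parts := by
  rw [replacePart_parts, card_insert_of_notMem (P.notMem_parts_erase_of_disjoint hB hB' hdisj),
    card_erase_add_one hB]

lemma part_replacePart {x : ι} (hx : x ∈ B') : (P.replacePart hB hB' hdisj ht).part x = B' :=
  part_eq_of_mem _ (mem_insert_self _ _) hx

lemma sum_parts_replacePart {M : Type*} [AddCommGroup M] (f : Finset ι → M) :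
    ∑ C ∈ (P.replacePart hB hB' hdisj ht).parts, f C = ∑ C ∈ P.parts, f C - f B + f B' := by
  rw [replacePart_parts, sum_insert (P.notMem_parts_erase_of_disjoint hB hB' hdisj),
    sum_erase_eq_sub hB]
  abel

end ReplacePart

section Point

variable {a : ι}

def insertPoint (Q : Finpartition s) {B : Finset ι} (hB : B ∈ Q.parts) (ha : a ∉ s) :
    Finpartition (insert a s) :=
  Q.replacePart hB (insert_nonempty a B)
    (disjoint_insert_left.2 ⟨fun h => ha (mem_sdiff.1 h).1, disjoint_sdiff⟩)
    (by have := Q.subset hB; ext; grind)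

lemma erase_part_nonempty (P : Finpartition (insert a s)) (h : {a} ∉ P.parts) :
    ((P.part a).erase a).Nonempty := by
  rw [nonempty_iff_ne_empty, Ne, erase_eq_empty_iff, part_eq_empty, not_or, not_not]
  exact ⟨mem_insert_self a s, fun h' => h (h' ▸ P.part_mem.2 (mem_insert_self a s))⟩

def erasePoint (P : Finpartition (insert a s)) (ha : a ∉ s) (h : {a} ∉ P.parts) :
    Finpartition s :=
  P.replacePart (P.part_mem.2 (mem_insert_self a s)) (P.erase_part_nonempty h)
    (disjoint_sdiff.mono_left (erase_subset _ _))
    (by have := P.part_subset a; have := P.mem_part_self.2 (mem_insert_self a s); ext; grind)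

lemma insertPoint_parts (Q : Finpartition s) {B : Finset ι} (hB : B ∈ Q.parts) (ha : a ∉ s) :
    (Q.insertPoint hB ha).parts = insert (insert a B) (Q.parts.erase B) := rfl

lemma erasePoint_parts (P : Finpartition (insert a s)) (ha : a ∉ s) (h : {a} ∉ P.parts) :
    (P.erasePoint ha h).parts = insert ((P.part a).erase a) (P.parts.erase (P.part a)) := rfl

lemma singleton_notMem_parts (Q : Finpartition s) (ha : a ∉ s) : {a} ∉ Q.parts :=
  fun h => ha (Q.subset h (mem_singleton_self a))

lemma singleton_notMem_parts_insertPoint (Q : Finpartition s) {B : Finset ι} (hB : B ∈ Q.parts)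
    (ha : a ∉ s) : {a} ∉ (Q.insertPoint hB ha).parts := by
  rw [insertPoint_parts, mem_insert, not_or]
  refine ⟨fun h => ?_, fun h => Q.singleton_notMem_parts ha (mem_of_mem_erase h)⟩
  obtain ⟨x, hx⟩ := Q.nonempty_of_mem_parts hB
  have hxa : x = a := mem_singleton.1 (h ▸ mem_insert_of_mem hx)
  exact ha (hxa ▸ Q.subset hB hx)

lemma card_filter_singleton_mem_parts (ha : a ∉ s) (k : ℕ) :
    #{P : Finpartition (insert a s) | #P.parts = k + 1 ∧ {a} ∈ P.parts} =
      #{Q : Finpartition s | #Q.parts = k} := by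
  have hsup (P : Finpartition (insert a s)) (h : {a} ∈ P.parts) :
      (P.parts.erase {a}).sup id = s := by
    rw [P.sup_parts_erase h]
    grind
  refine card_bij'
    (fun P hP => P.ofSubset (erase_subset {a} P.parts) (hsup P (mem_filter.1 hP).2.2))
    (fun Q _ => Q.extend (b := {a}) (singleton_ne_empty a) (disjoint_singleton_right.2 ha)
      (by rw [sup_eq_union, union_comm, ← insert_eq])) ?_ ?_ ?_ ?_
  · intro P hP
    simp only [mem_filter, mem_univ, true_and] at hP ⊢
    rw [ofSubset_parts, card_erase_of_mem hP.2, hP.1, Nat.add_sub_cancel]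
  · intro Q hQ
    simp only [mem_filter, mem_univ, true_and] at hQ ⊢
    exact ⟨by rw [card_extend, hQ], by simp⟩
  · intro P hP
    ext1
    simp [insert_erase (mem_filter.1 hP).2.2]
  · intro Q _
    ext1
    simp [erase_insert (Q.singleton_notMem_parts ha)]

lemma card_filter_singleton_notMem_parts (ha : a ∉ s) (k : ℕ) :
    #{P : Finpartition (insert a s) | #P.parts = k + 1 ∧ {a} ∉ P.parts} =
      (k + 1) * #{Q : Finpartition s | #Q.parts = k + 1} := by
  set S := ({Q : Finpartition s | #Q.parts = k + 1} : Finset _)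
  have hS : #(S.sigma fun Q => Q.parts) = (k + 1) * #S := by
    rw [card_sigma, sum_congr rfl fun Q hQ => (mem_filter.1 hQ).2, sum_const, smul_eq_mul,
      mul_comm]
  rw [← hS]
  refine card_bij' (fun P hP => ⟨P.erasePoint ha (mem_filter.1 hP).2.2, (P.part a).erase a⟩)
    (fun x hx => x.1.insertPoint (mem_sigma.1 hx).2 ha) ?_ ?_ ?_ ?_
  · intro P hP
    simp only [mem_filter, mem_univ, true_and, S, mem_sigma] at hP ⊢
    exact ⟨by rw [erasePoint, card_parts_replacePart, hP.1], by simp [erasePoint_parts]⟩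
  · rintro ⟨Q, B⟩ hx
    simp only [mem_filter, mem_univ, true_and, S, mem_sigma] at hx ⊢
    exact ⟨by rw [insertPoint, card_parts_replacePart, hx.1],
      Q.singleton_notMem_parts_insertPoint hx.2 ha⟩
  · intro P hP
    ext1
    rw [insertPoint_parts, erasePoint, replacePart_parts_erase,
      insert_erase (P.mem_part_self.2 (mem_insert_self a s)),
      insert_erase (P.part_mem.2 (mem_insert_self a s))]
  · rintro ⟨Q, B⟩ hx
    have hB := (mem_sigma.1 hx).2
    have hpart : (Q.insertPoint hB ha).part a = insert a B :=
      part_replacePart _ _ _ _ _ (mem_insert_self a B)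
    have haB : a ∉ B := fun h => ha (Q.subset hB h)
    refine Sigma.ext ?_ (heq_of_eq ?_)
    · ext1
      rw [erasePoint_parts, hpart, erase_insert haB, insertPoint, replacePart_parts_erase,
        insert_erase hB]
    · rw [hpart, erase_insert haB]

lemma card_filter_card_parts_insert (ha : a ∉ s) (k : ℕ) :
    #{P : Finpartition (insert a s) | #P.parts = k + 1} =
      (k + 1) * #{Q : Finpartition s | #Q.parts = k + 1} +
        #{Q : Finpartition s | #Q.parts = k} := by
  rw [← card_filter_singleton_mem_parts ha k, ← card_filter_singleton_notMem_parts ha k,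
    ← card_filter_add_card_filter_not (fun P : Finpartition (insert a s) => {a} ∈ P.parts),
    filter_filter, filter_filter, Nat.add_comm]

end Point

theorem card_filter_card_parts_eq_stirlingSecond (s : Finset ι) (k : ℕ) :
    #{P : Finpartition s | #P.parts = k} = Nat.stirlingSecond #s k := by
  induction s using Finset.induction_on generalizing k with
  | empty =>
    have hparts (P : Finpartition (∅ : Finset ι)) : P.parts = ∅ := P.parts_eq_empty_iff.2 rfl
    cases k with
    | zero =>
      rw [filter_true_of_mem fun P _ => by rw [hparts, card_empty], card_univ,
        Fintype.card_eq_one_iff.2 ⟨⊥, fun P => Finpartition.ext (by rw [hparts, hparts])⟩]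
      rfl
    | succ k => simp [hparts]
  | insert a s ha ih =>
    rw [card_insert_of_notMem ha]
    cases k with
    | zero =>
      rw [Nat.stirlingSecond_succ_zero, card_eq_zero, filter_eq_empty_iff]
      intro P _ h
      exact (P.parts_nonempty (insert_nonempty a s).ne_empty).ne_empty (card_eq_zero.1 h)
    | succ k => rw [card_filter_card_parts_insert ha, ih, ih, Nat.stirlingSecond_succ_succ]

section Merge

variable {a b m : ι}

def mergePoints (P : Finpartition s) (hab : b ∈ P.part a) (hm : m ∉ s) :
    Finpartition (insert m ((s.erase a).erase b)) :=
  P.replacePart (B' := insert m (((P.part a).erase a).erase b))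
    (P.part_mem.2 (P.part_nonempty.1 ⟨b, hab⟩)) (insert_nonempty _ _)
    (disjoint_insert_left.2 ⟨fun h => hm (mem_sdiff.1 h).1,
      disjoint_sdiff.mono_left ((erase_subset _ _).trans (erase_subset _ _))⟩)
    (by
      have := P.mem_part_self.2 (P.part_nonempty.1 ⟨b, hab⟩)
      have := P.part_subset a
      ext; grind)

def splitPoint (Q : Finpartition (insert m ((s.erase a).erase b))) (ha : a ∈ s) (hb : b ∈ s)
    (hm : m ∉ s) : Finpartition s :=
  Q.replacePart (B' := insert a (insert b ((Q.part m).erase m)))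
    (Q.part_mem.2 (mem_insert_self _ _)) (insert_nonempty _ _)
    (by
      refine disjoint_insert_left.2 ⟨?_, disjoint_insert_left.2 ⟨?_,
        disjoint_sdiff.mono_left (erase_subset _ _)⟩⟩ <;> simp only [mem_sdiff, mem_insert,
          mem_erase] <;> grind)
    (by
      have := Q.mem_part_self.2 (mem_insert_self m ((s.erase a).erase b))
      have := Q.part_subset m
      ext; grind)

lemma mergePoints_parts (P : Finpartition s) (hab : b ∈ P.part a) (hm : m ∉ s) :
    (P.mergePoints hab hm).parts =
      insert (insert m (((P.part a).erase a).erase b)) (P.parts.erase (P.part a)) := rfl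

lemma splitPoint_parts (Q : Finpartition (insert m ((s.erase a).erase b))) (ha : a ∈ s)
    (hb : b ∈ s) (hm : m ∉ s) :
    (Q.splitPoint ha hb hm).parts =
      insert (insert a (insert b ((Q.part m).erase m))) (Q.parts.erase (Q.part m)) := rfl

variable (Q : Finpartition (insert m ((s.erase a).erase b))) (ha : a ∈ s) (hb : b ∈ s)
  (hm : m ∉ s)

lemma card_parts_splitPoint : #(Q.splitPoint ha hb hm).parts = #Q.parts :=
  card_parts_replacePart _ _ _ _ _

lemma sum_parts_splitPoint {M : Type*} [AddCommGroup M] (f : Finset ι → M) :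
    ∑ C ∈ (Q.splitPoint ha hb hm).parts, f C =
      ∑ C ∈ Q.parts, f C - f (Q.part m) + f (insert a (insert b ((Q.part m).erase m))) :=
  sum_parts_replacePart _ _ _ _ _ f

lemma part_splitPoint :
    (Q.splitPoint ha hb hm).part a = insert a (insert b ((Q.part m).erase m)) :=
  part_replacePart _ _ _ _ _ (mem_insert_self _ _)

lemma mem_part_splitPoint : b ∈ (Q.splitPoint ha hb hm).part a := by
  rw [part_splitPoint]
  exact mem_insert_of_mem (mem_insert_self _ _)

lemma mergePoints_splitPoint :
    (Q.splitPoint ha hb hm).mergePoints (Q.mem_part_splitPoint ha hb hm) hm = Q := by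
  have hmerge : insert m (((insert a (insert b ((Q.part m).erase m))).erase a).erase b) =
      Q.part m := by
    have := Q.mem_part_self.2 (mem_insert_self m ((s.erase a).erase b))
    have := Q.part_subset m
    ext; grind
  ext1
  rw [mergePoints_parts, part_splitPoint, hmerge, splitPoint, replacePart_parts_erase,
    insert_erase (Q.part_mem.2 (mem_insert_self _ _))]

lemma splitPoint_mergePoints (P : Finpartition s) (hab : b ∈ P.part a) :
    (P.mergePoints hab hm).splitPoint ha hb hm = P := by
  have hpart : (P.mergePoints hab hm).part m = insert m (((P.part a).erase a).erase b) :=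
    part_replacePart _ _ _ _ _ (mem_insert_self _ _)
  have hsplit : insert a (insert b ((insert m (((P.part a).erase a).erase b)).erase m)) =
      P.part a := by
    have := P.mem_part_self.2 ha
    have := P.part_subset a
    ext; grind
  ext1
  rw [splitPoint_parts, hpart, hsplit, mergePoints, replacePart_parts_erase,
    insert_erase (P.part_mem.2 ha)]

theorem sum_filter_mem_part_eq_sum_splitPoint {M : Type*} [AddCommMonoid M]
    (f : Finpartition s → M) :
    ∑ P with b ∈ P.part a, f P =
      ∑ Q : Finpartition (insert m ((s.erase a).erase b)), f (Q.splitPoint ha hb hm) := by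
  symm
  refine sum_bij' (fun Q _ => Q.splitPoint ha hb hm)
    (fun P hP => P.mergePoints (mem_filter.1 hP).2 hm)
    (fun Q _ => mem_filter.2 ⟨mem_univ _, Q.mem_part_splitPoint ha hb hm⟩)
    (fun _ _ => mem_univ _) (fun Q _ => Q.mergePoints_splitPoint ha hb hm)
    (fun P hP => splitPoint_mergePoints ha hb hm P (mem_filter.1 hP).2) (fun _ _ => rfl)

end Merge

lemma sum_parts_sum_sum_erase {M : Type*} [AddCommMonoid M] (P : Finpartition s)
    (f : ι → ι → M) :
    ∑ A ∈ P.parts, ∑ x ∈ A, ∑ y ∈ A.erase x, f x y =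
      ∑ x ∈ s, ∑ y ∈ s.erase x, if y ∈ P.part x then f x y else 0 := by
  have hpart : ∀ A ∈ P.parts, ∑ x ∈ A, ∑ y ∈ A.erase x, f x y =
      ∑ x ∈ A, ∑ y ∈ (P.part x).erase x, f x y := fun A hA =>
    sum_congr rfl fun x hx => by rw [P.part_eq_of_mem hA hx]
  have hunion := sum_biUnion (f := fun x => ∑ y ∈ (P.part x).erase x, f x y)
    P.supIndep.pairwiseDisjoint
  rw [P.biUnion_parts] at hunion
  simp only [id] at hunion
  rw [sum_congr rfl hpart, ← hunion]
  refine sum_congr rfl fun x _ => ?_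
  rw [← sum_filter]
  congr 1
  ext y
  have := @P.part_subset _ _ _ x y
  simp only [mem_erase, mem_filter]
  tauto

end Finpartition

open Nat in
/-- The Möbius function `μ(π, 1̂)` of the lattice of set partitions, for a partition `π` with
`k` blocks. -/
def partitionMobius (k : ℕ) : ℝ := (-1) ^ (k - 1) * (k - 1)!

lemma sum_range_partitionMobius_mul_stirlingSecond {m : ℕ} (hm : 2 ≤ m) :
    ∑ k ∈ range (m + 1), partitionMobius k * m.stirlingSecond k = 0 := by
  obtain ⟨i, rfl⟩ := Nat.exists_eq_add_of_le' hm
  set j := i + 1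
  set f : ℕ → ℝ := fun k => (-1) ^ k * k.factorial * j.stirlingSecond k
  have hterm : ∀ k ∈ range (j + 1),
      partitionMobius (k + 1) * (j + 1).stirlingSecond (k + 1) = f k - f (k + 1) := by
    intro k _
    simp only [partitionMobius, f, Nat.add_sub_cancel, Nat.stirlingSecond_succ_succ,
      Nat.factorial_succ, pow_succ]
    push_cast
    ring
  rw [sum_range_succ', sum_congr rfl hterm, sum_range_sub', Nat.stirlingSecond_succ_zero]
  simp [f, j, Nat.stirlingSecond_eq_zero_of_lt (Nat.lt_succ_self (i + 1))]

theorem Finpartition.sum_partitionMobius_card_parts {ι : Type*} [DecidableEq ι] {s : Finset ι}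
    (hs : 2 ≤ #s) : ∑ P : Finpartition s, partitionMobius #P.parts = 0 := by
  rw [← sum_fiberwise_of_maps_to (t := range (#s + 1)) (g := fun P => #P.parts)
    fun P _ => mem_range.2 (Nat.lt_succ_of_le P.card_parts_le_card)]
  calc ∑ k ∈ range (#s + 1), ∑ P : Finpartition s with #P.parts = k, partitionMobius #P.parts
      = ∑ k ∈ range (#s + 1), partitionMobius k * (#s).stirlingSecond k := by
        refine sum_congr rfl fun k _ => ?_
        rw [sum_congr rfl fun P hP => congrArg partitionMobius (mem_filter.1 hP).2, sum_const,
          card_filter_card_parts_eq_stirlingSecond, nsmul_eq_mul, mul_comm]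
    _ = 0 := sum_range_partitionMobius_mul_stirlingSecond hs

lemma hasDerivAt_sum_mul_exp_neg_mul {κ : Type*} (s : Finset κ) (c e : κ → ℝ) (t : ℝ) :
    HasDerivAt (fun β => ∑ i ∈ s, c i * Real.exp (-β * e i))
      (-∑ i ∈ s, c i * e i * Real.exp (-t * e i)) t := by
  refine (HasDerivAt.fun_sum (u := s) fun i _ =>
    (((hasDerivAt_neg t).mul_const (e i)).exp).const_mul (c i)).congr_deriv ?_
  rw [← sum_neg_distrib]
  exact sum_congr rfl fun i _ => by ring

section Interaction

variable {n : ℕ} {V : Sym2 (Fin n) → ℝ}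

lemma blockW_comm (α α' : Finset (Fin n)) : blockW n V α α' = blockW n V α' α := by
  unfold blockW
  rw [sum_comm]
  simp_rw [Sym2.eq_swap]

lemma blockW_union_left {α α' : Finset (Fin n)} (h : Disjoint α α') (β : Finset (Fin n)) :
    blockW n V (α ∪ α') β = blockW n V α β + blockW n V α' β :=
  sum_union h

lemma Uhat_eq_sum_sub_sum (F : Finset (Finset (Fin n))) :
    Uhat n V F = (∑ α ∈ F, ∑ β ∈ F, blockW n V α β - ∑ α ∈ F, blockW n V α α) / 2 := by
  rw [Uhat, ← sum_sub_distrib]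
  exact congrArg (· / 2) (sum_congr rfl fun α hα => sum_erase_eq_sub hα)

lemma Uhat_insert {F : Finset (Finset (Fin n))} {α : Finset (Fin n)} (hα : α ∉ F) :
    Uhat n V (insert α F) = Uhat n V F + ∑ β ∈ F, blockW n V α β := by
  simp_rw [Uhat_eq_sum_sub_sum, sum_insert hα, sum_add_distrib]
  rw [sum_congr rfl fun β _ => blockW_comm β α]
  ring

lemma Uhat_insert_insert {F : Finset (Finset (Fin n))} {α α' : Finset (Fin n)}
    (hαα' : Disjoint α α') (hα : α ∉ insert α' F) (hα' : α' ∉ F) (hμ : α ∪ α' ∉ F) :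
    Uhat n V (insert α (insert α' F)) = Uhat n V (insert (α ∪ α') F) + blockW n V α α' := by
  rw [Uhat_insert hα, Uhat_insert hα', Uhat_insert hμ, sum_insert hα']
  simp_rw [blockW_union_left hαα', sum_add_distrib]
  ring

end Interaction

section PartitionSum

variable {n : ℕ} {V : Sym2 (Fin n) → ℝ} {γ : Finset (Finset (Fin n))}

lemma isPartitionOfFam_iff_exists_finpartition {π : Finset (Finset (Finset (Fin n)))} :
    isPartitionOfFam n γ π ↔ ∃ P : Finpartition γ, P.parts = π := by
  constructor
  · rintro ⟨hne, hdisj, hsup⟩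
    exact ⟨⟨π, supIndep_iff_pairwiseDisjoint.2 fun A hA A' hA' h => hdisj A hA A' hA' h, hsup,
      fun h => (hne ⊥ h).ne_empty rfl⟩, rfl⟩
  · rintro ⟨P, rfl⟩
    exact ⟨fun A hA => P.nonempty_of_mem_parts hA, fun A hA A' hA' h => P.disjoint hA hA' h,
      P.sup_parts⟩

lemma sum_filter_isPartitionOfFam {M : Type*} [AddCommMonoid M] (k : ℕ)
    (g : Finset (Finset (Finset (Fin n))) → M) :
    ∑ π ∈ univ.filter (fun π => isPartitionOfFam n γ π ∧ π.card = k), g π =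
      ∑ P : Finpartition γ with #P.parts = k, g P.parts := by
  symm
  refine sum_nbij (fun P => P.parts) (fun P hP => ?_) (fun P _ Q _ h => Finpartition.ext h)
    (fun π hπ => ?_) (fun _ _ => rfl)
  · simp only [mem_filter, mem_univ, true_and] at hP ⊢
    exact ⟨isPartitionOfFam_iff_exists_finpartition.2 ⟨P, rfl⟩, hP⟩
  · simp only [coe_filter, mem_univ, true_and, Set.mem_ofPred_eq] at hπ
    obtain ⟨P, rfl⟩ := isPartitionOfFam_iff_exists_finpartition.1 hπ.1
    exact ⟨P, by simpa using hπ.2, rfl⟩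

variable (V) in
noncomputable def energy (P : Finpartition γ) : ℝ := ∑ A ∈ P.parts, Uhat n V A

lemma psi_eq_sum_finpartition (hγ : γ.Nonempty) (β : ℝ) :
    psi n V β γ =
      ∑ P : Finpartition γ, partitionMobius #P.parts * Real.exp (-β * energy V P) := by
  rw [psi, ← sum_fiberwise_of_maps_to (t := Icc 1 #γ) (g := fun P : Finpartition γ => #P.parts)
    fun P _ => mem_Icc.2 ⟨card_pos.2 (P.parts_nonempty hγ.ne_empty), P.card_parts_le_card⟩]
  refine sum_congr rfl fun k _ => ?_
  rw [sum_filter_isPartitionOfFam, mul_sum]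
  refine sum_congr rfl fun P hP => ?_
  rw [(mem_filter.1 hP).2, partitionMobius, energy]

lemma psi_zero (hγ : 2 ≤ #γ) : psi n V 0 γ = 0 := by
  rw [psi_eq_sum_finpartition (card_pos.1 (by omega))]
  simpa using Finpartition.sum_partitionMobius_card_parts hγ

lemma hasDerivAt_psi (hγ : γ.Nonempty) (t : ℝ) :
    HasDerivAt (fun β => psi n V β γ)
      (-∑ P : Finpartition γ, partitionMobius #P.parts * energy V P *
        Real.exp (-t * energy V P)) t := by
  simp_rw [psi_eq_sum_finpartition hγ]
  exact hasDerivAt_sum_mul_exp_neg_mul _ _ _ t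

lemma continuous_psi (γ : Finset (Finset (Fin n))) : Continuous fun β => psi n V β γ := by
  unfold psi
  fun_prop

lemma energy_eq_sum_pairs (P : Finpartition γ) :
    energy V P = 1 / 2 * ∑ α ∈ γ, ∑ α' ∈ γ.erase α,
      if α' ∈ P.part α then blockW n V α α' else 0 := by
  simp only [energy, Uhat]
  rw [← sum_div, Finpartition.sum_parts_sum_sum_erase]
  ring

end PartitionSum

section MergeBlocks

variable {n : ℕ} {V : Sym2 (Fin n) → ℝ} {γ : Finset (Finset (Fin n))} {α α' : Finset (Fin n)}

lemma union_notMem_of_ne (hne : ∀ B ∈ γ, B.Nonempty)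
    (hdisj : ∀ B ∈ γ, ∀ C ∈ γ, B ≠ C → Disjoint B C) (hα : α ∈ γ) (hα' : α' ∈ γ)
    (h : α ≠ α') : α ∪ α' ∉ γ := by
  intro hμ
  have hblock : ∀ B ∈ γ, B ⊆ α ∪ α' → B = α ∪ α' := fun B hB hsub => by
    by_contra hB'
    exact (hne B hB).ne_empty ((hdisj B hB _ hμ hB').eq_bot_of_le hsub)
  exact h ((hblock α hα subset_union_left).trans (hblock α' hα' subset_union_right).symm)

lemma energy_splitPoint (hα : α ∈ γ) (hα' : α' ∈ γ) (hd : Disjoint α α') (hμ : α ∪ α' ∉ γ)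
    (Q : Finpartition (insert (α ∪ α') ((γ.erase α).erase α'))) :
    energy V (Q.splitPoint hα hα' hμ) = energy V Q + blockW n V α α' := by
  set B := Q.part (α ∪ α')
  have hμB : α ∪ α' ∈ B := Q.mem_part_self.2 (mem_insert_self _ _)
  have hnotB : ∀ x ∈ γ, x = α ∨ x = α' → x ∉ B := fun x hx hxα hxB => by
    have := Q.part_subset _ hxB
    simp only [mem_insert, mem_erase] at this
    grind
  have hαα' : α ≠ α' := fun h => hμ (by rw [← h, union_self]; exact hα)
  have hUhat := Uhat_insert_insert (V := V) (F := B.erase (α ∪ α')) hd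
    (by
      rw [mem_insert, not_or]
      exact ⟨hαα', fun h => hnotB α hα (.inl rfl) (mem_of_mem_erase h)⟩)
    (fun h => hnotB α' hα' (.inr rfl) (mem_of_mem_erase h)) (notMem_erase _ _)
  rw [insert_erase hμB] at hUhat
  rw [energy, energy, Finpartition.sum_parts_splitPoint, hUhat]
  ring

lemma sum_filter_mem_part_partitionMobius_mul_exp (hα : α ∈ γ) (hα' : α' ∈ γ)
    (hd : Disjoint α α') (hμ : α ∪ α' ∉ γ) (t : ℝ) :
    ∑ P : Finpartition γ with α' ∈ P.part α,
        partitionMobius #P.parts * Real.exp (-t * energy V P) =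
      Real.exp (-t * blockW n V α α') * psi n V t (mergeP n γ α α') := by
  rw [Finpartition.sum_filter_mem_part_eq_sum_splitPoint hα hα' hμ, mergeP,
    psi_eq_sum_finpartition (insert_nonempty _ _), mul_sum]
  refine sum_congr rfl fun Q _ => ?_
  rw [Finpartition.card_parts_splitPoint, energy_splitPoint hα hα' hd hμ, mul_add,
    Real.exp_add]
  ring

lemma sum_partitionMobius_mul_energy_mul_exp (hne : ∀ B ∈ γ, B.Nonempty)
    (hdisj : ∀ B ∈ γ, ∀ C ∈ γ, B ≠ C → Disjoint B C) (t : ℝ) :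
    ∑ P : Finpartition γ, partitionMobius #P.parts * energy V P * Real.exp (-t * energy V P) =
      1 / 2 * ∑ α ∈ γ, ∑ α' ∈ γ.erase α,
        blockW n V α α' * Real.exp (-t * blockW n V α α') * psi n V t (mergeP n γ α α') := by
  have hpairs (P : Finpartition γ) (x : ℝ) : partitionMobius #P.parts * energy V P * x =
      1 / 2 * ∑ α ∈ γ, ∑ α' ∈ γ.erase α,
        if α' ∈ P.part α then blockW n V α α' * (partitionMobius #P.parts * x) else 0 := by
    rw [energy_eq_sum_pairs]
    simp_rw [mul_sum, sum_mul]
    refine sum_congr rfl fun α _ => sum_congr rfl fun α' _ => ?_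
    split_ifs <;> ring
  simp_rw [hpairs, ← mul_sum]
  rw [sum_comm]
  refine congrArg _ (sum_congr rfl fun α hα => ?_)
  rw [sum_comm]
  refine sum_congr rfl fun α' hα' => ?_
  obtain ⟨hαα', hα'⟩ := mem_erase.1 hα'
  rw [← sum_filter, ← mul_sum, sum_filter_mem_part_partitionMobius_mul_exp hα hα'
    (hdisj α hα α' hα' hαα'.symm) (union_notMem_of_ne hne hdisj hα hα' hαα'.symm)]
  ring

end MergeBlocks

/-- The recursion for `ψ_β`: for any partition `γ` of `[n]` with at least two blocks,
`ψ_β(γ) = −∫_0^β ∑_{σ∈q(γ)} W_σ e^{−β' W_σ} ψ_{β'}(P_σ γ) dβ'` (the unordered-pair sum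
being written as half of the ordered double sum over pairs of distinct blocks). -/
theorem stmt11 (n : ℕ) (V : Sym2 (Fin n) → ℝ) (β : ℝ)
    (γ : Finset (Finset (Fin n))) (hγ : isSetPartition n γ) (hcard : 2 ≤ γ.card) :
    psi n V β γ =
      - ∫ β' in (0 : ℝ)..β, (1 / 2) *
          ∑ α ∈ γ, ∑ α' ∈ γ.erase α,
            blockW n V α α' * Real.exp (-β' * blockW n V α α') *
              psi n V β' (mergeP n γ α α') := by
  have hderiv (t : ℝ) : HasDerivAt (fun β => psi n V β γ) (-((1 / 2) *
      ∑ α ∈ γ, ∑ α' ∈ γ.erase α, blockW n V α α' * Real.exp (-t * blockW n V α α') *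
        psi n V t (mergeP n γ α α'))) t := by
    rw [← sum_partitionMobius_mul_energy_mul_exp hγ.1 hγ.2.1]
    exact hasDerivAt_psi (card_pos.1 (by omega)) t
  have hcont : Continuous fun t => (1 / 2) * ∑ α ∈ γ, ∑ α' ∈ γ.erase α,
      blockW n V α α' * Real.exp (-t * blockW n V α α') * psi n V t (mergeP n γ α α') := by
    have := fun δ => continuous_psi (V := V) δ
    fun_prop
  have hFTC := intervalIntegral.integral_eq_sub_of_hasDerivAt (fun t _ => hderiv t)
    (hcont.neg.intervalIntegrable 0 β)
  rw [intervalIntegral.integral_neg, psi_zero hcard, sub_zero] at hFTC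
  exact hFTC.symm
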